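/- arXiv:1111.1292 — 3 statements merged into one kernel-verified Lean document; each statement's English description precedes it below -/
import Mathlib

section
/- Let R be a commutative domain, σ : R → R a ring endomorphism, and δ : R → R a σ-derivation. If the Ore extension R[x;σ,δ] is a simple ring, then σ = id_R. -/
/-!
If `σ c ≠ c` for some `c`, commutativity of `R` forces `(σ c - c) δ r = (σ r - r) δ c` for all `r`,
so over the fraction field `K` of `R` the derivation `δ` becomes inner: with
`v = -δ c / (σ c - c)` one has `v r = σ(r) v + δ(r)` in `K`. By the universal property of the
Ore extension this gives a ring homomorphism `R[x;σ,δ] → K` with `x ↦ v`. It is injective since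
`R[x;σ,δ]` is simple, yet it kills the nonzero commutator `x c - c x = (σ c - c) x + δ c`, as `K`
is commutative.
-/

/-- `δ` is a `σ`-derivation of `R`: it is additive and satisfies the twisted Leibniz rule
`δ(ab) = σ(a)δ(b) + δ(a)b`. -/
def IsSigmaDerivation {R : Type*} [Ring R] (σ : R →+* R) (δ : R → R) : Prop :=
  (∀ a b : R, δ (a + b) = δ a + δ b) ∧ ∀ a b : R, δ (a * b) = σ a * δ b + δ a * b

/-- `S`, together with the ring morphism `f : R →+* S` and the element `x : S`, is an Ore
extension `R[x;σ,δ]`: the powers `1, x, x², …` form a basis of `S` as a left `R`-module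
(i.e. every element of `S` is, in a unique way, a finite sum `Σᵢ f(aᵢ) xⁱ`), and the
commutation rule `x·r = σ(r)·x + δ(r)` holds for all `r ∈ R`. -/
structure IsOreExtension {R S : Type*} [Ring R] [Ring S]
    (σ : R →+* R) (δ : R → R) (f : R →+* S) (x : S) : Prop where
  basis : Function.Bijective fun a : ℕ →₀ R => a.sum fun i r => f r * x ^ i
  rel : ∀ r : R, x * f r = f (σ r) * x + f (δ r)

/-- `R` is `σ`-`δ`-simple: the only two-sided ideals `J` of `R` with `σ(J) ⊆ J` and
`δ(J) ⊆ J` are `{0}` and `R`. -/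
def IsSigmaDeltaSimple {R : Type*} [Ring R] (σ : R →+* R) (δ : R → R) : Prop :=
  ∀ J : TwoSidedIdeal R, (∀ a ∈ J, σ a ∈ J) → (∀ a ∈ J, δ a ∈ J) → J = ⊥ ∨ J = ⊤

/-- `R` is `δ`-simple: the only two-sided ideals `J` of `R` with `δ(J) ⊆ J` are `{0}`
and `R`. -/
def IsDeltaSimple {R : Type*} [Ring R] (δ : R → R) : Prop :=
  ∀ J : TwoSidedIdeal R, (∀ a ∈ J, δ a ∈ J) → J = ⊥ ∨ J = ⊤

namespace IsSigmaDerivation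

variable {R : Type*} [CommRing R] {σ : R →+* R} {δ : R → R}

theorem sub_mul_eq_sub_mul (hδ : IsSigmaDerivation σ δ) (a b : R) :
    (σ a - a) * δ b = (σ b - b) * δ a := by
  have hab := hδ.2 a b
  rw [mul_comm a b, hδ.2 b a] at hab
  linear_combination -hab

theorem exists_mul_eq_of_map_sub_ne_zero {K : Type*} [Field K] (hδ : IsSigmaDerivation σ δ)
    (i : R →+* K) {c : R} (hc : i (σ c - c) ≠ 0) :
    ∃ v : K, ∀ r : R, v * i r = i (σ r) * v + i (δ r) := by
  refine ⟨-i (δ c) / i (σ c - c), fun r => ?_⟩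
  have key := congrArg i (hδ.sub_mul_eq_sub_mul c r)
  simp only [map_mul, map_sub] at key hc ⊢
  field_simp
  linear_combination -key

end IsSigmaDerivation

namespace IsOreExtension

variable {R S T : Type*} [Ring R] [Ring S] [Ring T] {σ : R →+* R} {δ : R → R} {f : R →+* S}
  {x : S} (hS : IsOreExtension σ δ f x)
include hS

noncomputable def basisEquiv : (ℕ →₀ R) ≃+ S :=
  AddEquiv.ofBijective
    (Finsupp.liftAddHom fun n => (AddMonoidHom.mulRight (x ^ n)).comp f.toAddMonoidHom) hS.basis

@[simp]
theorem basisEquiv_single (n : ℕ) (r : R) : hS.basisEquiv (Finsupp.single n r) = f r * x ^ n :=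
  Finsupp.liftAddHom_apply_single _ n r

theorem addHom_ext {M : Type*} [AddMonoid M] {φ ψ : S →+ M}
    (h : ∀ (n : ℕ) (r : R), φ (f r * x ^ n) = ψ (f r * x ^ n)) : φ = ψ := by
  have hcomp : φ.comp hS.basisEquiv.toAddMonoidHom = ψ.comp hS.basisEquiv.toAddMonoidHom :=
    Finsupp.addHom_ext fun n r => by simpa using h n r
  ext s
  simpa using DFunLike.congr_fun hcomp (hS.basisEquiv.symm s)

theorem map_mul_add_map_ne_zero {a : R} (ha : a ≠ 0) (b : R) : f a * x + f b ≠ 0 := by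
  have hsum : f a * x + f b = hS.basisEquiv (Finsupp.single 1 a + Finsupp.single 0 b) := by
    simp
  rw [hsum, map_ne_zero_iff _ hS.basisEquiv.injective]
  intro h
  exact ha (by simpa using DFunLike.congr_fun h 1)

noncomputable def liftAddHom (i : R →+* T) (v : T) : S →+ T :=
  (Finsupp.liftAddHom fun n => (AddMonoidHom.mulRight (v ^ n)).comp i.toAddMonoidHom).comp
    hS.basisEquiv.symm.toAddMonoidHom

theorem liftAddHom_map_mul_pow (i : R →+* T) (v : T) (n : ℕ) (r : R) :
    hS.liftAddHom i v (f r * x ^ n) = i r * v ^ n := by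
  rw [← hS.basisEquiv_single]
  simp only [liftAddHom, AddMonoidHom.coe_comp, AddEquiv.coe_toAddMonoidHom, Function.comp_apply,
    AddEquiv.symm_apply_apply, Finsupp.liftAddHom_apply_single, AddMonoidHom.coe_mulRight,
    RingHom.toAddMonoidHom_eq_coe, AddMonoidHom.coe_coe]

theorem liftAddHom_map_mul (i : R →+* T) (v : T) (a : R) (s : S) :
    hS.liftAddHom i v (f a * s) = i a * hS.liftAddHom i v s := by
  change ((hS.liftAddHom i v).comp (AddMonoidHom.mulLeft (f a))) s =
    ((AddMonoidHom.mulLeft (i a)).comp (hS.liftAddHom i v)) s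
  congr 1
  refine hS.addHom_ext fun n r => ?_
  simp only [AddMonoidHom.coe_comp, Function.comp_apply, AddMonoidHom.coe_mulLeft, ← mul_assoc,
    ← map_mul, liftAddHom_map_mul_pow]

variable {i : R →+* T} {v : T} (hv : ∀ r : R, v * i r = i (σ r) * v + i (δ r))
include hv

theorem liftAddHom_mul_left (s : S) : hS.liftAddHom i v (x * s) = v * hS.liftAddHom i v s := by
  change ((hS.liftAddHom i v).comp (AddMonoidHom.mulLeft x)) s =
    ((AddMonoidHom.mulLeft v).comp (hS.liftAddHom i v)) s
  congr 1
  refine hS.addHom_ext fun n r => ?_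
  have hx : x * (f r * x ^ n) = f (σ r) * x ^ (n + 1) + f (δ r) * x ^ n := by
    rw [← mul_assoc, hS.rel r, add_mul, mul_assoc, ← pow_succ']
  simp only [AddMonoidHom.coe_comp, Function.comp_apply, AddMonoidHom.coe_mulLeft, hx, map_add,
    liftAddHom_map_mul_pow]
  rw [← mul_assoc, hv, add_mul, mul_assoc, ← pow_succ']

theorem liftAddHom_pow_mul (n : ℕ) (s : S) :
    hS.liftAddHom i v (x ^ n * s) = v ^ n * hS.liftAddHom i v s := by
  induction n with
  | zero => simp
  | succ n ih => rw [pow_succ', mul_assoc, hS.liftAddHom_mul_left hv, ih, ← mul_assoc, ← pow_succ']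

theorem liftAddHom_mul (s t : S) :
    hS.liftAddHom i v (s * t) = hS.liftAddHom i v s * hS.liftAddHom i v t := by
  change ((hS.liftAddHom i v).comp (AddMonoidHom.mulRight t)) s =
    ((AddMonoidHom.mulRight (hS.liftAddHom i v t)).comp (hS.liftAddHom i v)) s
  congr 1
  refine hS.addHom_ext fun n r => ?_
  simp only [AddMonoidHom.coe_comp, Function.comp_apply, AddMonoidHom.coe_mulRight]
  rw [liftAddHom_map_mul_pow, mul_assoc, hS.liftAddHom_map_mul, hS.liftAddHom_pow_mul hv, mul_assoc]

/-- The universal property of `R[x;σ,δ]`: `f r ↦ i r`, `x ↦ v`. -/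
noncomputable def lift : S →+* T :=
  { hS.liftAddHom i v with
    map_one' := by simpa using hS.liftAddHom_map_mul_pow i v 0 1
    map_mul' := hS.liftAddHom_mul hv }

end IsOreExtension

/-- If `R` is a commutative domain and the Ore extension `R[x;σ,δ]` is simple, then
`σ = id`. -/
theorem stmt_7 {R S : Type*} [CommRing R] [IsDomain R] [Ring S] (σ : R →+* R) (δ : R → R)
    (hδ : IsSigmaDerivation σ δ) (f : R →+* S) (x : S)
    (hS : IsOreExtension σ δ f x) (hsimple : IsSimpleRing S) :
    σ = RingHom.id R := by
  ext c
  by_contra hc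
  let i := algebraMap R (FractionRing R)
  have hb : i (σ c - c) ≠ 0 :=
    (map_ne_zero_iff i (IsFractionRing.injective R _)).2 (sub_ne_zero.2 hc)
  obtain ⟨v, hv⟩ := hδ.exists_mul_eq_of_map_sub_ne_zero i hb
  let Ψ := hS.lift hv
  have hcomm : Ψ (x * f c - f c * x) = 0 := by
    rw [map_sub, map_mul, map_mul, mul_comm, sub_self]
  have hne : x * f c - f c * x ≠ 0 := by
    rw [hS.rel, add_sub_right_comm, ← sub_mul, ← map_sub]
    exact hS.map_mul_add_map_ne_zero (sub_ne_zero.2 hc) _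
  exact hne (Ψ.injective (by rw [hcomm, map_zero]))
end

section
/- Let R be a domain, σ : R → R an injective ring endomorphism, and δ : R → R a σ-derivation. Then: (i) no element of R[x;σ,δ] \ R is invertible in the Ore extension R[x;σ,δ]; (ii) if R[x;σ,δ] is a simple ring, then the center of R[x;σ,δ] is contained in R and equals the set of r ∈ Z(R) with δ(r) = 0. -/
namespace IsSigmaDerivation

variable {R : Type*} [Ring R] {σ : R →+* R} {δ : R → R}

theorem map_add (hδ : IsSigmaDerivation σ δ) (a b : R) : δ (a + b) = δ a + δ b := hδ.1 a b

theorem map_mul (hδ : IsSigmaDerivation σ δ) (a b : R) : δ (a * b) = σ a * δ b + δ a * b :=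
  hδ.2 a b

theorem map_zero (hδ : IsSigmaDerivation σ δ) : δ 0 = 0 := by
  simpa using hδ.map_add 0 0

theorem sigma_sub_mul_eq_zero (hδ : IsSigmaDerivation σ δ) {r : R} (hr : r ∈ Subring.center R)
    (hδr : δ r = 0) (b : R) : (σ r - r) * δ b = 0 := by
  have h := hδ.map_mul r b
  rw [(Subring.mem_center_iff.mp hr b).symm, hδ.map_mul b r, hδr, mul_zero, zero_add, zero_mul,
    add_zero, Subring.mem_center_iff.mp hr] at h
  rw [sub_mul, ← h, sub_self]

end IsSigmaDerivation

theorem Finsupp.exists_max_ne_zero {M : Type*} [Zero M] (p : ℕ →₀ M) (hp : p ≠ 0) :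
    ∃ n, p n ≠ 0 ∧ ∀ j, n < j → p j = 0 := by
  obtain ⟨n, hn, hmax⟩ := p.support.exists_max_image id (Finsupp.support_nonempty_iff.mpr hp)
  refine ⟨n, Finsupp.mem_support_iff.mp hn, fun j hj => ?_⟩
  by_contra h
  exact absurd (hmax j (Finsupp.mem_support_iff.mpr h)) (not_le.mpr hj)

namespace IsOreExtension

variable {R S : Type*} [Ring R] [Ring S] {σ : R →+* R} {δ : R → R} {f : R →+* S} {x : S}

noncomputable def repr (hS : IsOreExtension σ δ f x) : S ≃+ (ℕ →₀ R) :=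
  (AddEquiv.ofBijective
    (Finsupp.liftAddHom fun i => (AddMonoidHom.mulRight (x ^ i)).comp f.toAddMonoidHom)
    hS.basis).symm

variable (hS : IsOreExtension σ δ f x)
include hS

theorem repr_symm_single (i : ℕ) (a : R) : hS.repr.symm (Finsupp.single i a) = f a * x ^ i := by
  simp [repr]

theorem repr_f_mul_pow (a : R) (i : ℕ) : hS.repr (f a * x ^ i) = Finsupp.single i a := by
  rw [← repr_symm_single hS, AddEquiv.apply_symm_apply]

theorem repr_f (a : R) : hS.repr (f a) = Finsupp.single 0 a := by
  simpa using hS.repr_f_mul_pow a 0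

theorem repr_x : hS.repr x = Finsupp.single 1 1 := by
  simpa using hS.repr_f_mul_pow 1 1

theorem f_injective : Function.Injective f := fun a b h =>
  Finsupp.single_injective 0 (by rw [← hS.repr_f, ← hS.repr_f, h])

theorem induction_on {P : S → Prop} (s : S) (zero : P 0)
    (add : ∀ s t, P s → P t → P (s + t))
    (monomial : ∀ (a : R) (i : ℕ), P (f a * x ^ i)) : P s := by
  rw [← hS.repr.symm_apply_apply s]
  induction hS.repr s using Finsupp.induction with
  | zero => rwa [map_zero]
  | single_add i a p _ _ ih => rw [map_add, repr_symm_single]; exact add _ _ (monomial a i) ih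

theorem mem_center_of_commute {z : S} (hx : Commute z x) (hf : ∀ a : R, Commute z (f a)) :
    z ∈ Subring.center S :=
  Subring.mem_center_iff.mpr fun s => Eq.symm <| hS.induction_on s (Commute.zero_right z)
    (fun _ _ => Commute.add_right) fun a i => (hf a).mul_right (hx.pow_right i)

theorem repr_f_mul_apply (a : R) (s : S) (k : ℕ) :
    hS.repr (f a * s) k = a * hS.repr s k := by
  induction s using hS.induction_on with
  | zero => simp
  | add s t hs ht => simp [mul_add, hs, ht]
  | monomial b i =>
    rw [← mul_assoc, ← map_mul, repr_f_mul_pow, repr_f_mul_pow, Finsupp.single_apply,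
      Finsupp.single_apply]
    split_ifs <;> simp

theorem x_mul_f_mul_pow (a : R) (i : ℕ) :
    x * (f a * x ^ i) = f (σ a) * x ^ (i + 1) + f (δ a) * x ^ i := by
  rw [← mul_assoc, hS.rel, add_mul, mul_assoc, ← pow_succ']

theorem eq_f_of_repr_apply_pos_eq_zero {s : S} (hs : ∀ j, 0 < j → hS.repr s j = 0) :
    s = f (hS.repr s 0) := by
  apply hS.repr.injective
  ext (_ | j)
  · simp [repr_f]
  · simp [repr_f, hs (j + 1) j.succ_pos]

theorem repr_mul_apply (s t : S) (k : ℕ) :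
    hS.repr (s * t) k = (hS.repr s).sum fun i a => a * hS.repr (x ^ i * t) k := by
  induction s using hS.induction_on with
  | zero => simp
  | add s s' hs hs' =>
    rw [add_mul, map_add, Finsupp.add_apply, map_add, hs, hs',
      Finsupp.sum_add_index' (fun _ => zero_mul _) (fun _ _ _ => add_mul _ _ _)]
  | monomial a i =>
    rw [mul_assoc, repr_f_mul_apply, repr_f_mul_pow, Finsupp.sum_single_index (zero_mul _)]

variable (hδ : IsSigmaDerivation σ δ)
include hδ

theorem repr_x_mul_apply_zero (s : S) : hS.repr (x * s) 0 = δ (hS.repr s 0) := by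
  induction s using hS.induction_on with
  | zero => simp [hδ.map_zero]
  | add s t hs ht => simp [mul_add, hs, ht, hδ.map_add]
  | monomial a i =>
    rw [x_mul_f_mul_pow hS, AddEquiv.map_add, repr_f_mul_pow, repr_f_mul_pow, repr_f_mul_pow]
    rcases i with _ | i <;> simp [hδ.map_zero]

theorem repr_x_mul_apply_succ (s : S) (k : ℕ) :
    hS.repr (x * s) (k + 1) = σ (hS.repr s k) + δ (hS.repr s (k + 1)) := by
  induction s using hS.induction_on with
  | zero => simp [hδ.map_zero]
  | add s t hs ht => simp only [mul_add, map_add, Finsupp.add_apply, hs, ht, hδ.map_add]; abel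
  | monomial a i =>
    rw [x_mul_f_mul_pow hS, AddEquiv.map_add, repr_f_mul_pow, repr_f_mul_pow, repr_f_mul_pow]
    simp only [Finsupp.add_apply, Finsupp.single_apply, add_left_inj]
    split_ifs <;> simp_all [hδ.map_zero]

theorem repr_x_pow_mul_apply_zero (i : ℕ) (t : S) :
    hS.repr (x ^ i * t) 0 = δ^[i] (hS.repr t 0) := by
  induction i with
  | zero => simp
  | succ i ih =>
    rw [pow_succ', mul_assoc, hS.repr_x_mul_apply_zero hδ, ih, Function.iterate_succ_apply']

theorem repr_x_pow_mul_apply_of_lt {m : ℕ} {t : S} (ht : ∀ j, m < j → hS.repr t j = 0)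
    (i : ℕ) :
    ∀ k, m + i < k → hS.repr (x ^ i * t) k = 0 := by
  induction i with
  | zero => simpa using ht
  | succ i ih =>
    rintro (_ | k) hk
    · omega
    rw [pow_succ', mul_assoc, hS.repr_x_mul_apply_succ hδ, ih k (by omega), ih (k + 1) (by omega),
      map_zero, hδ.map_zero, add_zero]

theorem repr_x_pow_mul_apply_add {m : ℕ} {t : S} (ht : ∀ j, m < j → hS.repr t j = 0)
    (i : ℕ) :
    hS.repr (x ^ i * t) (m + i) = σ^[i] (hS.repr t m) := by
  induction i with
  | zero => simp
  | succ i ih =>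
    rw [pow_succ', mul_assoc, ← add_assoc, hS.repr_x_mul_apply_succ hδ, ih,
      hS.repr_x_pow_mul_apply_of_lt hδ ht i _ (by omega), hδ.map_zero, add_zero,
      Function.iterate_succ_apply']

theorem repr_mul_apply_add {n m : ℕ} {s t : S} (hs : ∀ j, n < j → hS.repr s j = 0)
    (ht : ∀ j, m < j → hS.repr t j = 0) :
    hS.repr (s * t) (n + m) = hS.repr s n * σ^[n] (hS.repr t m) := by
  rw [repr_mul_apply, Finsupp.sum, Finset.sum_eq_single n]
  · rw [add_comm, hS.repr_x_pow_mul_apply_add hδ ht]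
  · intro i hi hin
    have hlt : i < n :=
      lt_of_le_of_ne (not_lt.mp fun h => Finsupp.mem_support_iff.mp hi (hs i h)) hin
    rw [hS.repr_x_pow_mul_apply_of_lt hδ ht i _ (by omega), mul_zero]
  · intro hn
    rw [Finsupp.notMem_support_iff.mp hn, zero_mul]

theorem mem_range_of_mul_eq_one [IsDomain R] (hinj : Function.Injective σ) {s t : S}
    (h : s * t = 1) : s ∈ Set.range f := by
  have : Nontrivial S := hS.f_injective.nontrivial
  obtain ⟨n, hsn, hs⟩ := (hS.repr s).exists_max_ne_zero <|
    hS.repr.map_ne_zero_iff.mpr (left_ne_zero_of_mul_eq_one h)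
  obtain ⟨m, htm, ht⟩ := (hS.repr t).exists_max_ne_zero <|
    hS.repr.map_ne_zero_iff.mpr (right_ne_zero_of_mul_eq_one h)
  have htop := hS.repr_mul_apply_add hδ hs ht
  rw [h, ← map_one f, repr_f, Finsupp.single_apply] at htop
  have hnm : n + m = 0 := by
    by_contra hnm
    rw [if_neg (Ne.symm hnm)] at htop
    exact mul_ne_zero hsn (((hinj.iterate n).ne_iff' (iterate_map_zero σ n)).mpr htm) htop.symm
  exact ⟨_, (eq_f_of_repr_apply_pos_eq_zero hS fun j hj => hs j (by omega)).symm⟩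

noncomputable def constCoeff (hδ₀ : ∀ a, δ a = 0) : S →+* R where
  toFun s := hS.repr s 0
  map_zero' := by simp
  map_add' s t := by simp
  map_one' := by
    change hS.repr 1 0 = 1
    rw [← map_one f, repr_f, Finsupp.single_eq_same]
  map_mul' s t := by
    rw [repr_mul_apply, Finsupp.sum, Finset.sum_eq_single 0]
    · rw [pow_zero, one_mul]
    · rintro (_ | i) - hi
      · exact absurd rfl hi
      · rw [hS.repr_x_pow_mul_apply_zero hδ, Function.iterate_succ_apply', hδ₀, mul_zero]
    · intro h0
      rw [Finsupp.notMem_support_iff.mp h0, zero_mul]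

theorem exists_delta_ne_zero [Nontrivial R] [IsSimpleRing S] : ∃ a, δ a ≠ 0 := by
  by_contra! hδ₀
  have hx : hS.constCoeff hδ hδ₀ x = hS.constCoeff hδ hδ₀ 0 := by
    simp [constCoeff, repr_x]
  have hx0 := congrArg hS.repr ((hS.constCoeff hδ hδ₀).injective hx)
  rw [hS.repr_x, map_zero] at hx0
  exact one_ne_zero (Finsupp.single_eq_zero.mp hx0)

theorem sigma_eq_self_of_mem_center [IsDomain R] [IsSimpleRing S] {r : R}
    (hr : r ∈ Subring.center R) (hδr : δ r = 0) : σ r = r := by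
  obtain ⟨b, hb⟩ := hS.exists_delta_ne_zero hδ
  exact sub_eq_zero.mp ((mul_eq_zero.mp (hδ.sigma_sub_mul_eq_zero hr hδr b)).resolve_right hb)

theorem f_mem_center [IsDomain R] [IsSimpleRing S] {r : R} (hr : r ∈ Subring.center R)
    (hδr : δ r = 0) : f r ∈ Subring.center S := by
  refine hS.mem_center_of_commute ?_ fun a => ?_
  · rw [Commute, SemiconjBy, hS.rel, hS.sigma_eq_self_of_mem_center hδ hr hδr, hδr, map_zero,
      add_zero]
  · rw [Commute, SemiconjBy, ← map_mul, ← map_mul, Subring.mem_center_iff.mp hr a]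

theorem exists_eq_f_of_mem_center [IsDomain R] [IsSimpleRing S] (hinj : Function.Injective σ)
    {z : S} (hz : z ∈ Subring.center S) : ∃ r ∈ Subring.center R, δ r = 0 ∧ f r = z := by
  rcases eq_or_ne z 0 with rfl | hz0
  · exact ⟨0, Subring.zero_mem _, hδ.map_zero, map_zero f⟩
  obtain ⟨t, ht⟩ := (IsSimpleRing.isField_center S).mul_inv_cancel
    (a := ⟨z, hz⟩) (by simpa [Subtype.ext_iff] using hz0)
  obtain ⟨r, rfl⟩ := hS.mem_range_of_mul_eq_one hδ hinj (congrArg Subtype.val ht)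
  have hcomm := Subring.mem_center_iff.mp hz
  refine ⟨r, Subring.mem_center_iff.mpr fun b => hS.f_injective ?_, ?_, rfl⟩
  · simpa using hcomm (f b)
  · simpa [hS.repr_x_mul_apply_zero hδ, repr_f_mul_apply, repr_f, repr_x]
      using congrArg (hS.repr · 0) (hcomm x)

end IsOreExtension

/-- Let `R` be a domain and `σ` injective. Then (i) no element of `R[x;σ,δ] ∖ R` is
invertible, and (ii) if `R[x;σ,δ]` is simple then its center is contained in `R` and
consists of those `r ∈ Z(R)` with `δ(r) = 0`. -/
theorem stmt_10 {R S : Type*} [Ring R] [IsDomain R] [Ring S] (σ : R →+* R) (δ : R → R)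
    (hδ : IsSigmaDerivation σ δ) (hinj : Function.Injective σ) (f : R →+* S) (x : S)
    (hS : IsOreExtension σ δ f x) :
    (∀ s : S, s ∉ Set.range f → ¬ IsUnit s) ∧
    (IsSimpleRing S →
      (Subring.center S : Set S) = f '' {r : R | r ∈ Subring.center R ∧ δ r = 0}) := by
  refine ⟨fun s hs ⟨u, hu⟩ => hs ?_, fun _ => ?_⟩
  · exact hS.mem_range_of_mul_eq_one hδ hinj (hu ▸ u.mul_inv)
  ext z
  constructor
  · intro hz
    obtain ⟨r, hr, hδr, rfl⟩ := hS.exists_eq_f_of_mem_center hδ hinj hz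
    exact ⟨r, ⟨hr, hδr⟩, rfl⟩
  · rintro ⟨r, ⟨hr, hδr⟩, rfl⟩
    exact hS.f_mem_center hδ hr hδr
end

section
/- Let R be a commutative domain of characteristic zero and δ : R → R a derivation. If the differential polynomial ring R[x;id_R,δ] is a simple ring, then R is a maximal commutative subring of R[x;id_R,δ]. -/
/-! Let `s = Σᵢ f(aᵢ) xⁱ` commute with `f(R)`. If `s ∉ f(R)`, its top coefficient is some
`a_{m+1} ≠ 0`. Since `xⁱ f(r) = f(r) xⁱ + i f(δ r) xⁱ⁻¹ + (lower terms)`, comparing the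
coefficients of `xᵐ` in `s f(r) = f(r) s` gives `(m + 1) a_{m+1} δ(r) = 0`, so `δ = 0` in a
domain of characteristic zero. But for `δ = 0` the element `x` is central, nonzero and not a
unit, which is impossible since the center of a simple ring is a field. -/

theorem Finsupp.eq_single_zero_or_exists_last_ne_zero {M : Type*} [Zero M] (a : ℕ →₀ M) :
    a = Finsupp.single 0 (a 0) ∨ ∃ m, a (m + 1) ≠ 0 ∧ ∀ i, m + 1 < i → a i = 0 := by
  by_cases h : ∀ i, 0 < i → a i = 0
  · left
    ext (_ | i) <;> simp [h]
  · push Not at h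
    obtain ⟨i, hi0, hi⟩ := h
    have hne : a.support.Nonempty := ⟨i, by simpa⟩
    obtain ⟨m, hm⟩ : ∃ m, a.support.max' hne = m + 1 :=
      Nat.exists_eq_add_one.2 (hi0.trans_le (a.support.le_max' i (by simpa)))
    refine .inr ⟨m, hm ▸ Finsupp.mem_support_iff.1 (a.support.max'_mem hne), fun j hj => ?_⟩
    by_contra hj0
    have := a.support.le_max' j (by simpa)
    omega

namespace IsOreExtension

section Ring

variable {R S : Type*} [Ring R] [Ring S]

noncomputable def oreEval (f : R →+* S) (x : S) : (ℕ →₀ R) →+ S :=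
  Finsupp.liftAddHom fun i => (AddMonoidHom.mulRight (x ^ i)).comp f.toAddMonoidHom

theorem oreEval_apply (f : R →+* S) (x : S) (a : ℕ →₀ R) :
    oreEval f x a = a.sum fun i r => f r * x ^ i :=
  Finsupp.liftAddHom_apply _ _

theorem oreEval_single (f : R →+* S) (x : S) (i : ℕ) (r : R) :
    oreEval f x (Finsupp.single i r) = f r * x ^ i := by
  simp [oreEval]

theorem oreEval_smul (f : R →+* S) (x : S) (r : R) (a : ℕ →₀ R) :
    oreEval f x (r • a) = f r * oreEval f x a := by
  rw [oreEval_apply, oreEval_apply, Finsupp.sum_smul_index' (by simp), Finsupp.mul_sum]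
  simp only [smul_eq_mul, map_mul, mul_assoc]

/-- The coefficients of `x * Σᵢ f(cᵢ) xⁱ` in `R[x; id, d]`, by `x f(c) = f(c) x + f(d c)`. -/
noncomputable def mulXCoeff (d : R →+ R) : (ℕ →₀ R) →+ (ℕ →₀ R) :=
  Finsupp.mapDomain.addMonoidHom (· + 1) + Finsupp.mapRange.addMonoidHom d

variable (d : R →+ R)

theorem mulXCoeff_apply_zero (c : ℕ →₀ R) : mulXCoeff d c 0 = d (c 0) := by
  simp [mulXCoeff, Finsupp.mapDomain_of_notMem_range]

theorem mulXCoeff_apply_succ (c : ℕ →₀ R) (k : ℕ) :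
    mulXCoeff d c (k + 1) = c k + d (c (k + 1)) := by
  simp [mulXCoeff, Finsupp.mapDomain_apply (add_left_injective 1)]

theorem mulXCoeff_iterate_single_apply_of_lt (r : R) {i k : ℕ} (hik : i < k) :
    (mulXCoeff d)^[i] (Finsupp.single 0 r) k = 0 := by
  induction i generalizing k with
  | zero => simp [hik.ne]
  | succ i ih =>
    obtain ⟨k, rfl⟩ : ∃ k', k = k' + 1 := ⟨k - 1, by omega⟩
    rw [Function.iterate_succ_apply', mulXCoeff_apply_succ, ih (by omega), ih (by omega),
      map_zero, add_zero]

theorem mulXCoeff_iterate_single_apply_self (r : R) (i : ℕ) :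
    (mulXCoeff d)^[i] (Finsupp.single 0 r) i = r := by
  induction i with
  | zero => simp
  | succ i ih =>
    rw [Function.iterate_succ_apply', mulXCoeff_apply_succ, ih,
      mulXCoeff_iterate_single_apply_of_lt d r (Nat.lt_succ_self i), map_zero, add_zero]

theorem mulXCoeff_iterate_succ_single_apply (r : R) (i : ℕ) :
    (mulXCoeff d)^[i + 1] (Finsupp.single 0 r) i = (i + 1 : R) * d r := by
  induction i with
  | zero => simp [mulXCoeff_apply_zero]
  | succ i ih =>
    rw [Function.iterate_succ_apply', mulXCoeff_apply_succ, ih,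
      mulXCoeff_iterate_single_apply_self]
    push_cast
    exact (add_one_mul _ _).symm

theorem sum_smul_mulXCoeff_iterate_apply (r : R) {a : ℕ →₀ R} {m : ℕ}
    (ha : ∀ i, m + 1 < i → a i = 0) :
    (a.sum fun i c => c • (mulXCoeff d)^[i] (Finsupp.single 0 r)) m
      = a m * r + a (m + 1) * ((m + 1 : R) * d r) := by
  have hsupp : a.support ⊆ Finset.range (m + 2) := fun i hi => by
    by_contra h
    exact Finsupp.mem_support_iff.1 hi (ha i (by simp at h; omega))
  rw [Finsupp.sum_of_support_subset a hsupp _ (by simp), Finset.sum_apply',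
    Finset.sum_range_succ, Finset.sum_range_succ, Finset.sum_eq_zero fun i hi => ?_]
  · simp only [Finsupp.smul_apply, smul_eq_mul, mulXCoeff_iterate_single_apply_self,
      mulXCoeff_iterate_succ_single_apply, zero_add]
  · rw [Finsupp.smul_apply, mulXCoeff_iterate_single_apply_of_lt d r (Finset.mem_range.1 hi),
      smul_zero]

variable {d} {f : R →+* S} {x : S}

theorem bijective_oreEval (hS : IsOreExtension (RingHom.id R) d f x) :
    Function.Bijective (oreEval f x) := by
  convert hS.basis
  exact oreEval_apply f x _

theorem mul_oreEval (hS : IsOreExtension (RingHom.id R) d f x) (c : ℕ →₀ R) :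
    x * oreEval f x c = oreEval f x (mulXCoeff d c) := by
  have hshift :
      oreEval f x (Finsupp.mapDomain (· + 1) c) = c.sum fun i r => f r * x ^ (i + 1) := by
    rw [oreEval_apply]
    exact Finsupp.sum_mapDomain_index (by simp) (by simp [add_mul])
  have hd : oreEval f x (Finsupp.mapRange d d.map_zero c) = c.sum fun i r => f (d r) * x ^ i := by
    rw [oreEval_apply]
    exact Finsupp.sum_mapRange_index (by simp)
  rw [mulXCoeff, AddMonoidHom.add_apply, map_add, Finsupp.mapDomain.addMonoidHom_apply,
    Finsupp.mapRange.addMonoidHom_apply, hshift, hd, oreEval_apply, Finsupp.mul_sum,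
    ← Finsupp.sum_add]
  refine Finsupp.sum_congr fun i _ => ?_
  rw [← mul_assoc, hS.rel, RingHom.id_apply, add_mul, mul_assoc, ← pow_succ']

theorem pow_mul_map (hS : IsOreExtension (RingHom.id R) d f x) (i : ℕ) (r : R) :
    x ^ i * f r = oreEval f x ((mulXCoeff d)^[i] (Finsupp.single 0 r)) := by
  induction i with
  | zero => simp [oreEval_single]
  | succ i ih => rw [Function.iterate_succ_apply', ← hS.mul_oreEval, ← ih, pow_succ', mul_assoc]

theorem oreEval_mul_map (hS : IsOreExtension (RingHom.id R) d f x) (a : ℕ →₀ R) (r : R) :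
    oreEval f x a * f r
      = oreEval f x (a.sum fun i c => c • (mulXCoeff d)^[i] (Finsupp.single 0 r)) := by
  rw [map_finsuppSum, oreEval_apply, Finsupp.sum_mul]
  refine Finsupp.sum_congr fun i _ => ?_
  rw [oreEval_smul, ← hS.pow_mul_map, mul_assoc]

theorem smul_eq_sum_of_commute (hS : IsOreExtension (RingHom.id R) d f x) {a : ℕ →₀ R} {r : R}
    (ha : Commute (oreEval f x a) (f r)) :
    r • a = a.sum fun i c => c • (mulXCoeff d)^[i] (Finsupp.single 0 r) :=
  hS.bijective_oreEval.injective <| by rw [oreEval_smul, ← hS.oreEval_mul_map, ha.eq]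

theorem commute_x (hS : IsOreExtension (RingHom.id R) ⇑(0 : R →+ R) f x) (s : S) :
    Commute x s := by
  have hx : ∀ r, Commute x (f r) := fun r => by
    simpa [Commute, SemiconjBy] using hS.rel r
  obtain ⟨a, rfl⟩ := hS.bijective_oreEval.surjective s
  rw [oreEval_apply]
  exact Commute.sum_right _ _ _ fun i _ => (hx (a i)).mul_right (Commute.self_pow x i)

theorem x_mul_ne_one [Nontrivial R] (hS : IsOreExtension (RingHom.id R) ⇑(0 : R →+ R) f x)
    (y : S) : x * y ≠ 1 := by
  obtain ⟨b, rfl⟩ := hS.bijective_oreEval.surjective y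
  intro h
  have h1 : oreEval f x (mulXCoeff 0 b) = oreEval f x (Finsupp.single 0 1) := by
    rw [← hS.mul_oreEval, h, oreEval_single]
    simp
  simpa [mulXCoeff_apply_zero] using DFunLike.congr_fun (hS.bijective_oreEval.injective h1) 0

theorem ne_zero_of_isSimpleRing [Nontrivial R] [IsSimpleRing S]
    (hS : IsOreExtension (RingHom.id R) d f x) : d ≠ 0 := by
  rintro rfl
  have hx0 : x ≠ 0 := fun hx => by
    have h : oreEval f x (Finsupp.single 1 1) = oreEval f x 0 := by
      rw [oreEval_single, hx]
      simp
    simpa using hS.bijective_oreEval.injective h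
  have hxc : x ∈ Subring.center S := Subring.mem_center_iff.2 fun s => (hS.commute_x s).eq.symm
  obtain ⟨y, hy⟩ := (IsSimpleRing.isField_center S).mul_inv_cancel (a := ⟨x, hxc⟩)
    (by simpa [Subtype.ext_iff] using hx0)
  exact hS.x_mul_ne_one y (congrArg Subtype.val hy)

end Ring

section CommRing

variable {R S : Type*} [CommRing R] [IsDomain R] [CharZero R] [Ring S] {d : R →+ R}
  {f : R →+* S} {x : S}

theorem mem_range_of_forall_commute (hS : IsOreExtension (RingHom.id R) d f x) (hd : d ≠ 0)
    {s : S} (hs : ∀ r, Commute s (f r)) : s ∈ f.range := by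
  obtain ⟨a, rfl⟩ := hS.bijective_oreEval.surjective s
  obtain ha | ⟨m, ham, htop⟩ := a.eq_single_zero_or_exists_last_ne_zero
  · refine ⟨a 0, ?_⟩
    rw [ha, oreEval_single, pow_zero, mul_one, Finsupp.single_eq_same]
  · refine absurd (AddMonoidHom.ext fun r => ?_) hd
    have hcoeff := DFunLike.congr_fun (hS.smul_eq_sum_of_commute (hs r)) m
    rw [Finsupp.smul_apply, smul_eq_mul, sum_smul_mulXCoeff_iterate_apply d r htop, mul_comm r,
      left_eq_add] at hcoeff
    simpa [ham, Nat.cast_add_one_ne_zero] using hcoeff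

end CommRing

end IsOreExtension

/-- If `R` is a commutative domain of characteristic zero and `R[x;id,δ]` is simple,
then `R` is a maximal commutative subring of `R[x;id,δ]`. -/
theorem stmt_17 {R S : Type*} [CommRing R] [IsDomain R] [CharZero R] [Ring S] (δ : R → R)
    (hδ : IsSigmaDerivation (RingHom.id R) δ) (f : R →+* S) (x : S)
    (hS : IsOreExtension (RingHom.id R) δ f x) (hsimple : IsSimpleRing S) :
    Subring.centralizer (Set.range f) = f.range := by
  let d : R →+ R := AddMonoidHom.mk' δ hδ.1
  have hSd : IsOreExtension (RingHom.id R) d f x := hS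
  refine le_antisymm (fun s hs => ?_) ?_
  · refine hSd.mem_range_of_forall_commute hSd.ne_zero_of_isSimpleRing fun r => ?_
    exact (Subring.mem_centralizer_iff.1 hs (f r) ⟨r, rfl⟩).symm
  · rintro _ ⟨r, rfl⟩
    refine Subring.mem_centralizer_iff.2 ?_
    rintro _ ⟨r', rfl⟩
    rw [← map_mul, ← map_mul, mul_comm]
end
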